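/- In a topological vector space, if A is cs-compact and B is cs-closed, then the sum A + B is cs-closed. -/

import Mathlib

open Pointwise

/-- A set is cs-compact if every convex series of its elements converges to a point of it. -/
def IsCsCompact {V : Type*} [AddCommGroup V] [Module ℝ V] [TopologicalSpace V]
    (A : Set V) : Prop :=
  ∀ (a : ℕ → V) (l : ℕ → ℝ), (∀ n, a n ∈ A) → (∀ n, 0 ≤ l n) → HasSum l 1 →
    ∃ x ∈ A, HasSum (fun n => l n • a n) x

/-- A set is cs-closed if every convergent convex series of its elements has sum in it. -/
def IsCsClosed {V : Type*} [AddCommGroup V] [Module ℝ V] [TopologicalSpace V]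
    (A : Set V) : Prop :=
  ∀ (a : ℕ → V) (l : ℕ → ℝ), (∀ n, a n ∈ A) → (∀ n, 0 ≤ l n) → HasSum l 1 →
    ∀ x : V, HasSum (fun n => l n • a n) x → x ∈ A

theorem csCompact_add_csClosed
    {V : Type*} [AddCommGroup V] [Module ℝ V] [TopologicalSpace V]
    [IsTopologicalAddGroup V]
    (A B : Set V) (hA : IsCsCompact A) (hB : IsCsClosed B) :
    IsCsClosed (A + B) := by
  intro c l hc hl hl_sum x hx
  choose a ha b hb hab using hc
  obtain ⟨y, hy, hay⟩ := hA a l ha hl hl_sum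
  have hby : HasSum (fun n => l n • b n) (x - y) := by
    simpa [← hab, smul_add] using hx.sub hay
  exact ⟨y, hy, x - y, hB b l hb hl hl_sum _ hby, add_sub_cancel y x⟩
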